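/- arXiv:2105.09181 — 2 statements merged into one kernel-verified Lean document; each statement's English description precedes it below -/
import Mathlib

section
/- Let n = n_1 + n_2 ≥ 2 with n_1, n_2 positive integers, let M be an m-by-n integer matrix with all entries at most K_1 in absolute value, and let b ∈ ℤ^m with ‖b‖_∞ ≤ K_2, where K_1, K_2 ≥ 1. Define S = {(x,y) ∈ ℤ_{>0}^{n_1} × ℤ_{>0}^{n_2} : M(x,y)^T = b}, and let S_min be the set of x ∈ ℤ_{>0}^{n_1} such that (x,y) ∈ S for some y, and there is no (x_*, y_*) ∈ S with x_* <_unif x. Then every x_min ∈ S_min satisfies ‖x_min‖_∞ ≤ 2^{2n} m^{mn} K_1^{m(n+3)} n^{m+1} + 2^n m^{mn} K_1^{mn} K_2. -/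
open Pointwise MeasureTheory

noncomputable section

/-- Embedding of integer vectors into real vectors. -/
def emb (d : ℕ) : (Fin d → ℤ) → (Fin d → ℝ) := fun x i => (x i : ℝ)

/-- The `N`-fold sumset `NA` (with `0·A = {0}`). -/
def nfold (d : ℕ) (A : Set (Fin d → ℤ)) (N : ℕ) : Set (Fin d → ℤ) :=
  {x | ∃ f : Fin N → (Fin d → ℤ), (∀ i, f i ∈ A) ∧ x = ∑ i, f i}

/-- `P(A) = ⋃_{N ≥ 1} NA`. -/
def PA (d : ℕ) (A : Set (Fin d → ℤ)) : Set (Fin d → ℤ) :=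
  ⋃ N ∈ Set.Ici 1, nfold d A N

/-- The width `w(A) = max_{a₁,a₂ ∈ A} ‖a₁ - a₂‖_∞`. -/
def width (d : ℕ) (A : Finset (Fin d → ℤ)) : ℕ :=
  (A ×ˢ A).sup fun p => Finset.univ.sup fun i => (p.1 i - p.2 i).natAbs

/-- The convex hull `H(A)` in `ℝ^d`. -/
def hull (d : ℕ) (A : Finset (Fin d → ℤ)) : Set (Fin d → ℝ) :=
  convexHull ℝ (emb d '' ↑A)

/-- The cone `C_B = {∑_{b ∈ B} c_b b : c_b ≥ 0}` generated by `B`. -/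
def cone (d : ℕ) (B : Finset (Fin d → ℤ)) : Set (Fin d → ℝ) :=
  {x | ∃ c : (Fin d → ℤ) → ℝ, (∀ a, 0 ≤ c a) ∧ x = ∑ a ∈ B, c a • emb d a}

/-- The lattice (subgroup of `ℤ^d`) generated by a set `S`. -/
def latt (d : ℕ) (S : Set (Fin d → ℤ)) : AddSubgroup (Fin d → ℤ) :=
  AddSubgroup.closure S

/-- The exceptional set `E(A) = (C_A ∩ Λ_A) ∖ P(A)`, viewed inside `ℤ^d`. -/
def excep (d : ℕ) (A : Finset (Fin d → ℤ)) : Set (Fin d → ℤ) :=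
  {x | emb d x ∈ cone d A ∧ x ∈ latt d ↑A ∧ x ∉ PA d ↑A}

/-- The set of (lattice) extreme points of `H(A)`: those `p` with `emb p ∈ H(A)` such that
some `v ∈ span ℝ (A - A)`, `v ≠ 0`, satisfies `⟨v,x⟩ > ⟨v,p⟩` for all `x ∈ H(A) ∖ {p}`. -/
def exP (d : ℕ) (A : Finset (Fin d → ℤ)) : Set (Fin d → ℤ) :=
  {p | emb d p ∈ hull d A ∧
    ∃ v ∈ Submodule.span ℝ (emb d '' ((A : Set (Fin d → ℤ)) - (A : Set (Fin d → ℤ)))),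
      v ≠ (0 : Fin d → ℝ) ∧
      ∀ x ∈ hull d A, x ≠ emb d p → (∑ i, v i * emb d p i) < ∑ i, v i * x i}

/-- The structure equation
`NA = (N·H(A) ∩ (N·a₀ + Λ_{A-A})) ∖ ⋃_{a ∈ ex(H(A))} (N·a - E(a - A))`. -/
def structEq (d : ℕ) (A : Finset (Fin d → ℤ)) (a0 : Fin d → ℤ) (N : ℕ) : Prop :=
  emb d '' nfold d ↑A N =
    ((N : ℝ) • hull d A ∩
      emb d '' (({N • a0} : Set (Fin d → ℤ)) +
        (latt d ((A : Set (Fin d → ℤ)) - (A : Set (Fin d → ℤ))) : Set (Fin d → ℤ)))) \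
    ⋃ a ∈ exP d A,
      emb d '' (({N • a} : Set (Fin d → ℤ)) - excep d (A.image fun y => a - y))

/-- `H(A)` is a `d`-simplex: there is `B ⊆ A` with `|B| = d+1`, `B - B` spanning `ℝ^d`,
and `H(A) = H(B)`. -/
def IsSimplex (d : ℕ) (A : Finset (Fin d → ℤ)) : Prop :=
  ∃ B ⊆ A, B.card = d + 1 ∧
    Submodule.span ℝ (emb d '' ((B : Set (Fin d → ℤ)) - (B : Set (Fin d → ℤ)))) = ⊤ ∧
    hull d B = hull d A

/-- `N_A(v)`: the minimal positive `N` with `v ∈ NA`, and `N_A(0) = 0`. -/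
def NAfn (d : ℕ) (A : Set (Fin d → ℤ)) (v : Fin d → ℤ) : ℕ :=
  if v = 0 then 0 else sInf {N : ℕ | 0 < N ∧ v ∈ nfold d A N}

/-- The set `S(A,B)` of `B`-minimal elements. -/
def Smin (d : ℕ) (A B : Set (Fin d → ℤ)) : Set (Fin d → ℤ) :=
  {0} ∪ {u | u ∈ PA d A ∧ u ≠ 0 ∧
    ∀ f : Fin (NAfn d A u) → (Fin d → ℤ), (∀ i, f i ∈ A) → u = ∑ i, f i →
      ∀ i, f i ∉ B ∪ ({0} : Set (Fin d → ℤ))}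

/-!
Let `w` be a positive solution of `M w = b` with `w j₀ ≥ T`, where `T - 1 = (2 n K₁)ᵐ (m K₂ + 1)`.
After flipping signs of rows we may assume `b ≥ 0`. For `0 ≤ t < T` the defect
`M ⌊t w / T⌋ - ⌊t b / T⌋` takes at most `(2 n K₁)ᵐ` values, while `⌊t b / T⌋` is monotone in `t`
and so is determined by its coordinate sum, which lies in `[0, m K₂]`. By pigeonhole there are
`t < t'` with `M ⌊t w / T⌋ = M ⌊t' w / T⌋`, and subtracting `⌊t' w / T⌋ - ⌊t w / T⌋` from `w`
gives a smaller positive solution whose `j₀`-coordinate drops. Hence the `x`-part of a minimal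
solution has all coordinates below `T`, and `T - 1` is at most the stated bound.
-/

open Matrix

def scaledFloor {ι : Type*} (T t : ℤ) (v : ι → ℤ) : ι → ℤ := fun j => t * v j / T

namespace scaledFloor

variable {ι : Type*} {T t t' : ℤ} {v : ι → ℤ}

lemma mono (hT : 0 < T) (hv : 0 ≤ v) (htt' : t ≤ t') :
    scaledFloor T t v ≤ scaledFloor T t' v :=
  fun j => Int.ediv_le_ediv hT (mul_le_mul_of_nonneg_right htt' (hv j))

lemma nonneg (hT : 0 ≤ T) (ht : 0 ≤ t) (hv : 0 ≤ v) : 0 ≤ scaledFloor T t v :=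
  fun j => Int.ediv_nonneg (mul_nonneg ht (hv j)) hT

lemma self (hT : T ≠ 0) : scaledFloor T T v = v :=
  funext fun _ => Int.mul_ediv_cancel_left _ hT

lemma lt_self (hT : 0 < T) (htT : t < T) {j : ι} (hv : 0 < v j) : scaledFloor T t v j < v j :=
  (Int.ediv_lt_iff_lt_mul hT).2 (by nlinarith)

lemma add_one_le (hT : 0 < T) {j : ι} (hv : T ≤ v j) :
    scaledFloor T t v j + 1 ≤ scaledFloor T (t + 1) v j := by
  rw [scaledFloor, scaledFloor, ← Int.add_mul_ediv_right _ _ hT.ne']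
  exact Int.ediv_le_ediv hT (by linarith)

lemma mulVec_sub_mem_Ioc {m n K : ℕ} (hnK : 0 < n * K) (M : Matrix (Fin m) (Fin n) ℤ)
    (hM : ∀ i j, (M i j).natAbs ≤ K) (hT : 0 < T) (v : Fin n → ℤ) (i : Fin m) :
    (M *ᵥ scaledFloor T t v - scaledFloor T t (M *ᵥ v)) i ∈
      Finset.Ioc (-(n * K : ℤ)) (n * K) := by
  set ψ := (M *ᵥ scaledFloor T t v - scaledFloor T t (M *ᵥ v)) i
  set E := ∑ j, M i j * (t * v j % T)
  have hψ : T * ψ = t * (M *ᵥ v) i % T - E := by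
    simp only [ψ, E, Pi.sub_apply, scaledFloor, mulVec, dotProduct, Int.emod_def, mul_sub,
      Finset.sum_sub_distrib, Finset.mul_sum]
    ring_nf
  have hE : |E| ≤ n * K * (T - 1) := by
    calc |E| ≤ ∑ j, |M i j * (t * v j % T)| := Finset.abs_sum_le_sum_abs _ _
      _ ≤ ∑ _j : Fin n, (K : ℤ) * (T - 1) := by
        refine Finset.sum_le_sum fun j _ => ?_
        rw [abs_mul, abs_of_nonneg (Int.emod_nonneg _ hT.ne')]
        have := Int.emod_lt_of_pos (t * v j) hT
        exact mul_le_mul (by rw [Int.abs_eq_natAbs]; exact_mod_cast hM i j) (by omega)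
          (Int.emod_nonneg _ hT.ne') (by positivity)
      _ = n * K * (T - 1) := by simp [mul_assoc]
  have hρ := Int.emod_nonneg (t * (M *ᵥ v) i) hT.ne'
  have hρ' := Int.emod_lt_of_pos (t * (M *ᵥ v) i) hT
  have hnK' : (0 : ℤ) < n * K := by exact_mod_cast hnK
  rw [abs_le] at hE
  rw [Finset.mem_Ioc]
  constructor
  · nlinarith
  · nlinarith

end scaledFloor

open scaledFloor in
lemma exists_lt_mulVec_scaledFloor_eq {m n K L T : ℕ} (hnK : 0 < n * K)
    (M : Matrix (Fin m) (Fin n) ℤ) (hM : ∀ i j, (M i j).natAbs ≤ K) {w : Fin n → ℤ}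
    (hb : 0 ≤ M *ᵥ w) (hbL : ∀ i, (M *ᵥ w) i ≤ L)
    (hT : (2 * n * K) ^ m * (m * L + 1) < T) :
    ∃ t t' : ℕ, t < t' ∧ t' < T ∧
      M *ᵥ scaledFloor T t w = M *ᵥ scaledFloor T t' w := by
  have hT0 : (0 : ℤ) < T := by omega
  set Y : ℕ → Fin n → ℤ := fun t => scaledFloor T t w
  set β : ℕ → Fin m → ℤ := fun t => scaledFloor T t (M *ᵥ w)
  set key : ℕ → (Fin m → ℤ) × ℤ := fun t => (M *ᵥ Y t - β t, ∑ i, β t i)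
  -- Since `β` is monotone in `t`, equal coordinate sums force equal values of `β`.
  have hkey : ∀ t t', t ≤ t' → key t = key t' → M *ᵥ Y t = M *ᵥ Y t' := by
    intro t t' htt' h
    obtain ⟨hψ, hsum⟩ := Prod.ext_iff.1 h
    have hβ : β t = β t' := funext fun i =>
      (Finset.sum_eq_sum_iff_of_le fun i _ => mono hT0 hb (by exact_mod_cast htt') i).1 hsum i
        (Finset.mem_univ i)
    have hψ' : M *ᵥ Y t - β t = M *ᵥ Y t' - β t' := hψ
    rw [hβ] at hψ'
    exact sub_left_injective hψ'
  set box : Finset ((Fin m → ℤ) × ℤ) :=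
    Fintype.piFinset (fun _ => Finset.Ioc (-(n * K : ℤ)) (n * K)) ×ˢ Finset.Icc 0 (m * L : ℤ)
  have hbox : box.card = (2 * n * K) ^ m * (m * L + 1) := by
    simp only [box, Finset.card_product, Fintype.card_piFinset, Int.card_Ioc, Int.card_Icc,
      Finset.prod_const, Finset.card_univ, Fintype.card_fin]
    have h1 : ((n * K : ℤ) - -(n * K : ℤ)).toNat = 2 * n * K := by rw [mul_assoc]; omega
    have h2 : ((m * L : ℤ) + 1 - 0).toNat = m * L + 1 := by omega
    rw [h1, h2]
  have hmaps : ∀ t ∈ Finset.range T, key t ∈ box := by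
    intro t ht
    have htT : (t : ℤ) ≤ T := by simp at ht; omega
    refine Finset.mem_product.2 ⟨Fintype.mem_piFinset.2 fun i => ?_, ?_⟩
    · exact mulVec_sub_mem_Ioc hnK M hM hT0 w i
    · have hβb : β t ≤ M *ᵥ w := (mono hT0 hb htT).trans (self hT0.ne').le
      have hβ0 : 0 ≤ β t := nonneg hT0.le (by positivity) hb
      show ∑ i, β t i ∈ Finset.Icc 0 (m * L : ℤ)
      refine Finset.mem_Icc.2 ⟨Finset.sum_nonneg fun i _ => hβ0 i, ?_⟩
      calc ∑ i, β t i ≤ ∑ _i : Fin m, (L : ℤ) :=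
            Finset.sum_le_sum fun i _ => (hβb i).trans (hbL i)
        _ = m * L := by simp
  obtain ⟨t, ht, t', ht', hne, heq⟩ :=
    Finset.exists_ne_map_eq_of_card_lt_of_maps_to (by simpa [hbox] using hT) hmaps
  rw [Finset.mem_range] at ht ht'
  rcases hne.lt_or_gt with hlt | hlt
  · exact ⟨t, t', hlt, ht', hkey t t' hlt.le heq⟩
  · exact ⟨t', t, hlt, ht, hkey t' t hlt.le heq.symm⟩

open scaledFloor in
lemma exists_smaller_pos_preimage_of_nonneg {m n K L : ℕ} (hK : 0 < K)
    (M : Matrix (Fin m) (Fin n) ℤ) (hM : ∀ i j, (M i j).natAbs ≤ K) {w : Fin n → ℤ}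
    (hw : ∀ j, 0 < w j) (hb : 0 ≤ M *ᵥ w) (hbL : ∀ i, (M *ᵥ w) i ≤ L) {j₀ : Fin n}
    (hj₀ : (((2 * n * K) ^ m * (m * L + 1) : ℕ) : ℤ) < w j₀) :
    ∃ w' : Fin n → ℤ, (∀ j, 0 < w' j) ∧ w' ≤ w ∧ w' j₀ < w j₀ ∧ M *ᵥ w' = M *ᵥ w := by
  set T := (2 * n * K) ^ m * (m * L + 1) + 1
  have hT0 : (0 : ℤ) < T := by positivity
  have hw0 : 0 ≤ w := fun j => (hw j).le
  obtain ⟨t, t', htt', ht'T, heq⟩ :=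
    exists_lt_mulVec_scaledFloor_eq (Nat.mul_pos j₀.pos hK) M hM hb hbL (Nat.lt_succ_self _)
  set Y : ℕ → Fin n → ℤ := fun t => scaledFloor T t w
  have hr0 : 0 ≤ Y t' - Y t := sub_nonneg.2 (mono hT0 hw0 (by exact_mod_cast htt'.le))
  refine ⟨w - (Y t' - Y t), fun j => ?_, sub_le_self w hr0, ?_, ?_⟩
  · have h1 : Y t' j < w j := lt_self hT0 (by exact_mod_cast ht'T) (hw j)
    have h2 : 0 ≤ Y t j := nonneg hT0.le (Nat.cast_nonneg t) hw0 j
    simp only [Pi.sub_apply]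
    omega
  · have h1 : Y t j₀ + 1 ≤ Y (t + 1) j₀ := by
      simp only [Y, Nat.cast_add, Nat.cast_one]
      exact add_one_le hT0 (by omega)
    have h2 : Y (t + 1) j₀ ≤ Y t' j₀ := mono hT0 hw0 (by exact_mod_cast htt') j₀
    simp only [Pi.sub_apply]
    omega
  · rw [mulVec_sub, mulVec_sub, heq, sub_self, sub_zero]

theorem exists_smaller_pos_preimage {m n K L : ℕ} (hK : 0 < K)
    (M : Matrix (Fin m) (Fin n) ℤ) (hM : ∀ i j, (M i j).natAbs ≤ K) {w : Fin n → ℤ}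
    (hw : ∀ j, 0 < w j) (hbL : ∀ i, ((M *ᵥ w) i).natAbs ≤ L) {j₀ : Fin n}
    (hj₀ : (((2 * n * K) ^ m * (m * L + 1) : ℕ) : ℤ) < w j₀) :
    ∃ w' : Fin n → ℤ, (∀ j, 0 < w' j) ∧ w' ≤ w ∧ w' j₀ < w j₀ ∧ M *ᵥ w' = M *ᵥ w := by
  -- Multiplying the rows on which `M *ᵥ w` is negative by `-1` reduces to `0 ≤ M *ᵥ w`.
  set s : Fin m → ℤ := fun i => if 0 ≤ (M *ᵥ w) i then 1 else -1
  have hss : ∀ i, s i * s i = 1 := fun i => by simp only [s]; split_ifs <;> norm_num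
  have hsb : ∀ i, s i * (M *ᵥ w) i = |(M *ᵥ w) i| := fun i => by
    simp only [s]; split_ifs with h
    · simp [abs_of_nonneg h]
    · simp [abs_of_neg (not_le.1 h)]
  have hflip : ∀ v i, ((diagonal s * M) *ᵥ v) i = s i * (M *ᵥ v) i := fun v i => by
    rw [← mulVec_mulVec, mulVec_diagonal]
  obtain ⟨w', hw', hle, hlt, heq⟩ := exists_smaller_pos_preimage_of_nonneg hK (diagonal s * M)
    (fun i j => by simp only [diagonal_mul, s]; split_ifs <;> simp [hM])
    hw (fun i => by rw [Pi.zero_apply, hflip, hsb]; exact abs_nonneg _)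
    (fun i => by rw [hflip, hsb, Int.abs_eq_natAbs]; exact_mod_cast hbL i) hj₀
  refine ⟨w', hw', hle, hlt, funext fun i => ?_⟩
  have := congrFun heq i
  rw [hflip, hflip] at this
  simpa [← mul_assoc, hss] using congrArg (s i * ·) this

lemma two_mul_le_two_pow (n : ℕ) : 2 * n ≤ 2 ^ n := by
  cases n with
  | zero => simp
  | succ k => have := k.lt_two_pow_self; rw [pow_succ]; omega

lemma two_mul_pow_mul_le {m n : ℕ} (hn : 0 < n) : (2 * n) ^ m * m ≤ 2 ^ n * m ^ (m * n) := by
  rcases Nat.lt_or_ge m 2 with hm | hm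
  · interval_cases m <;> simp [two_mul_le_two_pow]
  obtain ⟨k, hk⟩ : ∃ k, m * n = k + 1 :=
    ⟨m * n - 1, by have := Nat.mul_pos (by omega : 0 < m) hn; omega⟩
  calc (2 * n) ^ m * m ≤ (2 ^ n) ^ m * m := by gcongr; exact two_mul_le_two_pow n
    _ = 2 * (2 ^ k * m) := by rw [← pow_mul, mul_comm n, hk, pow_succ]; ring
    _ ≤ 2 ^ n * (m ^ k * m) := by
      gcongr
      exact Nat.le_self_pow hn.ne' 2
    _ = 2 ^ n * m ^ (m * n) := by rw [hk, pow_succ]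

lemma pigeonhole_bound_le {m n : ℕ} (K L : ℕ) (hn : 0 < n) (hK : 0 < K) :
    (2 * n * K) ^ m * (m * L + 1) ≤
      2 ^ (2 * n) * m ^ (m * n) * K ^ (m * (n + 3)) * n ^ (m + 1)
        + 2 ^ n * m ^ (m * n) * K ^ (m * n) * L := by
  have hmain : (2 * n) ^ m ≤ 2 ^ (2 * n) * m ^ (m * n) * n ^ (m + 1) := by
    rcases Nat.eq_zero_or_pos m with rfl | hm
    · simpa using Nat.mul_le_mul Nat.one_le_two_pow hn
    calc (2 * n) ^ m ≤ (2 * n) ^ m * m := Nat.le_mul_of_pos_right _ hm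
      _ ≤ 2 ^ n * m ^ (m * n) := two_mul_pow_mul_le hn
      _ = 2 ^ n * m ^ (m * n) * 1 := (mul_one _).symm
      _ ≤ 2 ^ (2 * n) * m ^ (m * n) * n ^ (m + 1) :=
        Nat.mul_le_mul (Nat.mul_le_mul_right _ (Nat.pow_le_pow_right two_pos (by omega)))
          (Nat.one_le_pow _ _ hn)
  calc (2 * n * K) ^ m * (m * L + 1) = (2 * n) ^ m * K ^ m + (2 * n) ^ m * m * K ^ m * L := by
        ring
    _ ≤ 2 ^ (2 * n) * m ^ (m * n) * n ^ (m + 1) * K ^ (m * (n + 3))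
          + 2 ^ n * m ^ (m * n) * K ^ (m * n) * L := by
        have hKn : K ^ m ≤ K ^ (m * n) := Nat.pow_le_pow_right hK (Nat.le_mul_of_pos_right m hn)
        have hKn3 : K ^ m ≤ K ^ (m * (n + 3)) := Nat.pow_le_pow_right hK (by nlinarith)
        exact Nat.add_le_add (Nat.mul_le_mul hmain hKn3)
          (Nat.mul_le_mul_right L (Nat.mul_le_mul (two_mul_pow_mul_le hn) hKn))
    _ = _ := by ring

theorem minimal_solutions_bound_general (m n1 n2 : ℕ)
    (M : Matrix (Fin m) (Fin (n1 + n2)) ℤ)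
    (b : Fin m → ℤ) (K1 K2 : ℕ) (hK1 : 1 ≤ K1)
    (hM : ∀ i j, (M i j).natAbs ≤ K1) (hb : ∀ i, (b i).natAbs ≤ K2) :
    ∀ xmin : Fin n1 → ℤ,
      ((∃ y : Fin n2 → ℤ, (∀ i, 0 < xmin i) ∧ (∀ i, 0 < y i) ∧
          M.mulVec (Fin.append xmin y) = b) ∧
        ¬∃ xs : Fin n1 → ℤ, ∃ ys : Fin n2 → ℤ,
          (∀ i, 0 < xs i) ∧ (∀ i, 0 < ys i) ∧ M.mulVec (Fin.append xs ys) = b ∧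
          (∀ i, xs i ≤ xmin i) ∧ xs ≠ xmin) →
      ∀ i, (xmin i).natAbs ≤
        2 ^ (2 * (n1 + n2)) * m ^ (m * (n1 + n2)) * K1 ^ (m * (n1 + n2 + 3))
            * (n1 + n2) ^ (m + 1)
          + 2 ^ (n1 + n2) * m ^ (m * (n1 + n2)) * K1 ^ (m * (n1 + n2)) * K2 := by
  rintro xmin ⟨⟨y, hx, hy, hxy⟩, hmin⟩ i
  set w := Fin.append xmin y
  have hw : ∀ j, 0 < w j := Fin.addCases (by simpa [w] using hx) (by simpa [w] using hy)
  refine le_trans ?_ (pigeonhole_bound_le K1 K2 (Nat.add_pos_left i.pos n2) hK1)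
  by_contra! hbig
  obtain ⟨w', hw', hle, hlt, heq⟩ := exists_smaller_pos_preimage hK1 M hM hw (hxy ▸ hb)
    (j₀ := Fin.castAdd n2 i) (by simp only [w, Fin.append_left]; have := hx i; omega)
  refine hmin ⟨fun k => w' (Fin.castAdd n2 k), fun k => w' (Fin.natAdd n1 k), fun k => hw' _,
    fun k => hw' _, by rw [Fin.append_castAdd_natAdd, heq, hxy],
    fun k => by simpa [w] using hle (Fin.castAdd n2 k), fun h => ?_⟩
  simp only [w, Fin.append_left] at hlt
  exact hlt.ne (congrFun h i)

/-- Bound on minimal positive solutions with respect to the coordinatewise partial order. -/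
theorem minimal_solutions_bound (m n1 n2 : ℕ) (hn1 : 0 < n1) (hn2 : 0 < n2)
    (hn : 2 ≤ n1 + n2)
    (M : Matrix (Fin m) (Fin (n1 + n2)) ℤ)
    (b : Fin m → ℤ) (K1 K2 : ℕ) (hK1 : 1 ≤ K1) (hK2 : 1 ≤ K2)
    (hM : ∀ i j, (M i j).natAbs ≤ K1) (hb : ∀ i, (b i).natAbs ≤ K2) :
    ∀ xmin : Fin n1 → ℤ,
      ((∃ y : Fin n2 → ℤ, (∀ i, 0 < xmin i) ∧ (∀ i, 0 < y i) ∧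
          M.mulVec (Fin.append xmin y) = b) ∧
        ¬∃ xs : Fin n1 → ℤ, ∃ ys : Fin n2 → ℤ,
          (∀ i, 0 < xs i) ∧ (∀ i, 0 < ys i) ∧ M.mulVec (Fin.append xs ys) = b ∧
          (∀ i, xs i ≤ xmin i) ∧ xs ≠ xmin) →
      ∀ i, (xmin i).natAbs ≤
        2 ^ (2 * (n1 + n2)) * m ^ (m * (n1 + n2)) * K1 ^ (m * (n1 + n2 + 3))
            * (n1 + n2) ^ (m + 1)
          + 2 ^ (n1 + n2) * m ^ (m * (n1 + n2)) * K1 ^ (m * (n1 + n2)) * K2 :=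
  minimal_solutions_bound_general m n1 n2 M b K1 K2 hK1 hM hb
end
end

section
/- Let A ⊂ ℤ^d be a finite set with 0 ∈ A and |A| = ℓ ≥ 2, and set K_A = 4 d^d ℓ^{3d} w(A)^{3d}. If x ∈ C_A ∩ Λ_A and (x + [−K_A, K_A]^d) ∩ span_ℝ(A) ⊆ C_A, then x ∈ P(A). -/
open Pointwise MeasureTheory

noncomputable section

/-!
Put `σ = ∑_{a ∈ A} a` and `C = ℓ · w(A)`, which bounds every coordinate of `∑_a c_a a` when
`|c_a| ≤ 1`. The point `x - (4C+1)^d σ` lies within `K_A` of `x`, hence in `C_A`; rounding its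
cone coefficients down leaves a lattice vector `δ` of sup-norm at most `C`. Writing
`δ = ∑_a n_a a`, the path `t ↦ ∑_a ⌊t n_a / T⌋ a` from `0` to `δ` moves by steps with coefficients
in `{-1, 0, 1}` and stays in the box `[-2C, 2C]^d`; a shortest such path visits each of the
`(4C+1)^d` points of the box at most once, so `δ = ∑_a m_a a` with `|m_a| ≤ (4C+1)^d`. Adding back
`(4C+1)^d σ` then makes every coefficient of `x` nonnegative.
-/

section Sumsets

variable {d : ℕ}

lemma add_mem_nfold {A : Set (Fin d → ℤ)} {M N : ℕ} {x y : Fin d → ℤ}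
    (hx : x ∈ nfold d A M) (hy : y ∈ nfold d A N) : x + y ∈ nfold d A (M + N) := by
  obtain ⟨f, hf, rfl⟩ := hx
  obtain ⟨g, hg, rfl⟩ := hy
  refine ⟨Fin.append f g, Fin.addCases (by simpa using hf) (by simpa using hg), ?_⟩
  simp [Fin.sum_univ_add]

lemma sum_nsmul_mem_nfold {A : Set (Fin d → ℤ)} (s : Finset (Fin d → ℤ)) (hs : ↑s ⊆ A)
    (N : (Fin d → ℤ) → ℕ) : ∑ a ∈ s, N a • a ∈ nfold d A (∑ a ∈ s, N a) := by
  induction s using Finset.induction_on with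
  | empty =>
    rw [Finset.sum_empty, Finset.sum_empty]
    exact ⟨Fin.elim0, nofun, by simp⟩
  | insert a s ha ih =>
    rw [Finset.coe_insert, Set.insert_subset_iff] at hs
    rw [Finset.sum_insert ha, Finset.sum_insert ha]
    exact add_mem_nfold ⟨fun _ => a, fun _ => hs.1, by simp⟩ (ih hs.2)

lemma sum_nsmul_mem_PA {A : Finset (Fin d → ℤ)} (h0 : 0 ∈ A) (N : (Fin d → ℤ) → ℕ) :
    ∑ a ∈ A, N a • a ∈ PA d ↑A := by
  have hsum := add_mem_nfold (⟨fun _ => 0, fun _ => h0, by simp⟩ : (0 : Fin d → ℤ) ∈ nfold d ↑A 1)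
    (sum_nsmul_mem_nfold A subset_rfl N)
  rw [zero_add] at hsum
  exact Set.mem_biUnion (Set.mem_Ici.mpr (Nat.le_add_right 1 _)) hsum

end Sumsets

section Lattice

variable {d : ℕ} {A : Finset (Fin d → ℤ)}

lemma exists_sum_zsmul_eq_of_mem_latt {z : Fin d → ℤ} (hz : z ∈ latt d ↑A) :
    ∃ n : (Fin d → ℤ) → ℤ, ∑ a ∈ A, n a • a = z := by
  rw [latt, ← Submodule.span_int_eq_addSubgroupClosure] at hz
  obtain ⟨n, -, hn⟩ := Submodule.mem_span_finset.mp hz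
  exact ⟨n, hn⟩

lemma emb_sum_zsmul (n : (Fin d → ℤ) → ℤ) :
    emb d (∑ a ∈ A, n a • a) = ∑ a ∈ A, (n a : ℝ) • emb d a := by
  ext i
  simp [emb, Finset.sum_apply]

lemma emb_mem_span_of_mem_latt {z : Fin d → ℤ} (hz : z ∈ latt d ↑A) :
    emb d z ∈ Submodule.span ℝ (emb d '' (A : Set (Fin d → ℤ))) := by
  obtain ⟨n, rfl⟩ := exists_sum_zsmul_eq_of_mem_latt hz
  rw [emb_sum_zsmul]
  exact Submodule.sum_mem _ fun a ha =>
    Submodule.smul_mem _ _ (Submodule.subset_span ⟨a, ha, rfl⟩)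

end Lattice

section StepGraph

variable {ι : Type*} (A : Finset (ι → ℤ))

def stepGraph (B : Finset (ι → ℤ)) : SimpleGraph B :=
  SimpleGraph.fromRel fun u v =>
    ∃ c : (ι → ℤ) → ℤ, (∀ a ∈ A, |c a| ≤ 1) ∧ (v : ι → ℤ) - u = ∑ a ∈ A, c a • a

variable {A} {B : Finset (ι → ℤ)}

lemma exists_sum_zsmul_of_walk {u v : B} (p : (stepGraph A B).Walk u v) :
    ∃ m : (ι → ℤ) → ℤ, (∀ a ∈ A, |m a| ≤ p.length) ∧ (v : ι → ℤ) - u = ∑ a ∈ A, m a • a := by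
  induction p with
  | nil => exact ⟨0, by simp, by simp⟩
  | @cons u w v huw p ih =>
    obtain ⟨m, hm, hmv⟩ := ih
    have hsplit : (v : ι → ℤ) - u = (v - w) + (w - u) := by abel
    obtain ⟨-, ⟨c, hc, hcw⟩ | ⟨c, hc, hcw⟩⟩ := (SimpleGraph.fromRel_adj _ _ _).mp huw
    · refine ⟨m + c, fun a ha => ?_, ?_⟩
      · simpa using (abs_add_le _ _).trans (add_le_add (hm a ha) (hc a ha))
      · simp [hsplit, hmv, hcw, add_smul, Finset.sum_add_distrib]
    · refine ⟨m - c, fun a ha => ?_, ?_⟩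
      · simpa using (abs_sub _ _).trans (add_le_add (hm a ha) (hc a ha))
      · rw [show (v : ι → ℤ) - u = (v - w) - (u - w) by abel, hmv, hcw]
        simp [sub_smul, Finset.sum_sub_distrib]

lemma exists_sum_zsmul_of_reachable {u v : B} (h : (stepGraph A B).Reachable u v) :
    ∃ m : (ι → ℤ) → ℤ, (∀ a ∈ A, |m a| ≤ B.card) ∧ (v : ι → ℤ) - u = ∑ a ∈ A, m a • a := by
  obtain ⟨p, hp⟩ := h.exists_isPath
  obtain ⟨m, hm, hmv⟩ := exists_sum_zsmul_of_walk p
  have hlen : p.length ≤ B.card := by simpa using hp.length_lt.le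
  exact ⟨m, fun a ha => (hm a ha).trans (by exact_mod_cast hlen), hmv⟩

lemma reachable_of_chain (γ : ℕ → ι → ℤ) (T : ℕ) (hγB : ∀ t ≤ T, γ t ∈ B)
    (hγ : ∀ t < T, ∃ c : (ι → ℤ) → ℤ, (∀ a ∈ A, |c a| ≤ 1) ∧
      γ (t + 1) - γ t = ∑ a ∈ A, c a • a) :
    (stepGraph A B).Reachable ⟨γ 0, hγB 0 (Nat.zero_le T)⟩ ⟨γ T, hγB T le_rfl⟩ := by
  suffices ∀ t (ht : t ≤ T), (stepGraph A B).Reachable ⟨γ 0, hγB 0 (Nat.zero_le T)⟩ ⟨γ t, hγB t ht⟩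
    from this T le_rfl
  intro t ht
  induction t with
  | zero => rfl
  | succ t ih =>
    refine (ih (by omega)).trans ?_
    by_cases heq : γ t = γ (t + 1)
    · exact (Subtype.ext heq : (⟨γ t, _⟩ : B) = ⟨γ (t + 1), _⟩) ▸ .refl _
    · exact SimpleGraph.Adj.reachable
        ((SimpleGraph.fromRel_adj _ _ _).mpr ⟨fun h => heq (congrArg Subtype.val h), .inl (hγ t ht)⟩)

end StepGraph

lemma abs_floor_add_sub_floor_le {x q : ℝ} (hq : |q| ≤ 1) : |⌊x + q⌋ - ⌊x⌋| ≤ 1 := by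
  rw [abs_le] at hq ⊢
  have hup : ⌊x + q⌋ ≤ ⌊x⌋ + 1 := by
    rw [← Int.floor_add_one]; exact Int.floor_mono (by linarith)
  have hlow : ⌊x⌋ - 1 ≤ ⌊x + q⌋ := by
    rw [← Int.floor_sub_one]; exact Int.floor_mono (by linarith)
  constructor <;> omega

section FloorPath

variable {ι : Type*} (A : Finset (ι → ℤ)) (n : (ι → ℤ) → ℤ) (T : ℕ)

def floorPath (t : ℕ) : ι → ℤ :=
  ∑ a ∈ A, ⌊(t : ℝ) * n a / T⌋ • a

lemma floorPath_zero : floorPath A n T 0 = 0 := by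
  simp [floorPath]

lemma floorPath_self (hT : T ≠ 0) : floorPath A n T T = ∑ a ∈ A, n a • a := by
  refine Finset.sum_congr rfl fun a _ => ?_
  rw [mul_div_cancel_left₀ _ (Nat.cast_ne_zero.mpr hT), Int.floor_intCast]

variable {A n T}

lemma floorPath_succ_sub (hn : ∀ a ∈ A, |n a| ≤ T) (t : ℕ) :
    ∃ c : (ι → ℤ) → ℤ, (∀ a ∈ A, |c a| ≤ 1) ∧
      floorPath A n T (t + 1) - floorPath A n T t = ∑ a ∈ A, c a • a := by
  refine ⟨fun a => ⌊((t + 1 : ℕ) : ℝ) * n a / T⌋ - ⌊(t : ℝ) * n a / T⌋, fun a ha => ?_, ?_⟩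
  · have hstep : ((t + 1 : ℕ) : ℝ) * n a / T = t * n a / T + n a / T := by push_cast; ring
    have hq : |(n a : ℝ) / T| ≤ 1 := by
      rw [abs_div, Nat.abs_cast]
      exact div_le_one_of_le₀ (by exact_mod_cast hn a ha) (Nat.cast_nonneg T)
    simpa only [hstep] using abs_floor_add_sub_floor_le hq
  · simp [floorPath, sub_smul, Finset.sum_sub_distrib]

lemma abs_floorPath_apply_le {t : ℕ} (ht : t ≤ T) (i : ι) :
    |floorPath A n T t i| ≤ ∑ a ∈ A, |a i| + |(∑ a ∈ A, n a • a) i| := by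
  set q : (ι → ℤ) → ℝ := fun a => (t : ℝ) * n a / T
  have hsplit : (floorPath A n T t i : ℝ) =
      ∑ a ∈ A, (⌊q a⌋ - q a) * a i + (t / T : ℝ) * ((∑ a ∈ A, n a • a) i : ℤ) := by
    simp only [floorPath, Finset.sum_apply, Pi.smul_apply, smul_eq_mul, Int.cast_sum,
      Int.cast_mul, Finset.mul_sum, ← Finset.sum_add_distrib, q]
    refine Finset.sum_congr rfl fun a _ => by ring
  have hfloor : ∀ a ∈ A, |(⌊q a⌋ - q a) * a i| ≤ |(a i : ℝ)| := fun a _ => by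
    rw [abs_mul]
    refine mul_le_of_le_one_left (abs_nonneg _) ?_
    rw [abs_sub_comm]
    exact (abs_of_nonneg (Int.fract_nonneg _)).le.trans (Int.fract_lt_one _).le
  have htT : |(t / T : ℝ)| ≤ 1 := by
    rw [abs_of_nonneg (by positivity)]
    exact div_le_one_of_le₀ (by exact_mod_cast ht) (Nat.cast_nonneg T)
  suffices |(floorPath A n T t i : ℝ)| ≤
      ∑ a ∈ A, |(a i : ℝ)| + |(((∑ a ∈ A, n a • a) i : ℤ) : ℝ)| by
    exact_mod_cast this
  rw [hsplit]
  calc _ ≤ |∑ a ∈ A, (⌊q a⌋ - q a) * a i| + |(t / T : ℝ) * ((∑ a ∈ A, n a • a) i : ℤ)| :=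
        abs_add_le _ _
    _ ≤ _ := add_le_add ((Finset.abs_sum_le_sum_abs _ _).trans (Finset.sum_le_sum hfloor))
        (by rw [abs_mul]; exact mul_le_of_le_one_left (abs_nonneg _) htT)

end FloorPath

theorem exists_sum_zsmul_eq_of_abs_le {ι : Type*} [Fintype ι] [DecidableEq ι]
    {A : Finset (ι → ℤ)} {C : ℕ} (hA : ∀ i, ∑ a ∈ A, |a i| ≤ C) (n : (ι → ℤ) → ℤ)
    (hδ : ∀ i, |(∑ a ∈ A, n a • a) i| ≤ C) :
    ∃ m : (ι → ℤ) → ℤ, (∀ a ∈ A, |m a| ≤ (4 * C + 1) ^ Fintype.card ι) ∧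
      ∑ a ∈ A, m a • a = ∑ a ∈ A, n a • a := by
  set T := ∑ a ∈ A, (n a).natAbs + 1
  have hnT : ∀ a ∈ A, |n a| ≤ T := fun a ha => by
    have := Finset.single_le_sum (f := fun a => (n a).natAbs) (fun _ _ => Nat.zero_le _) ha
    rw [Int.abs_eq_natAbs]
    omega
  set B := Fintype.piFinset fun _ : ι => Finset.Icc (-(2 * C : ℤ)) (2 * C)
  have hBcard : B.card = (4 * C + 1) ^ Fintype.card ι := by
    simp only [B, Fintype.card_piFinset, Int.card_Icc, Finset.prod_const, Finset.card_univ]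
    congr 1
    omega
  have hγB : ∀ t ≤ T, floorPath A n T t ∈ B := fun t ht => by
    refine Fintype.mem_piFinset.mpr fun i => Finset.mem_Icc.mpr (abs_le.mp ?_)
    linarith [abs_floorPath_apply_le (A := A) (n := n) ht i, hA i, hδ i]
  obtain ⟨m, hm, hmv⟩ := exists_sum_zsmul_of_reachable
    (reachable_of_chain _ T hγB (fun t _ => floorPath_succ_sub hnT t))
  refine ⟨m, fun a ha => (hm a ha).trans (by rw [hBcard]; push_cast; rfl), ?_⟩
  simpa [floorPath_zero, floorPath_self] using hmv.symm

section Cone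

variable {d : ℕ} {A : Finset (Fin d → ℤ)} {C : ℕ}

lemma exists_sub_sum_nsmul_abs_le (hA : ∀ i, ∑ a ∈ A, |a i| ≤ C) {y : Fin d → ℤ}
    (hy : emb d y ∈ cone d A) :
    ∃ k : (Fin d → ℤ) → ℕ, ∀ i, |(y - ∑ a ∈ A, k a • a) i| ≤ C := by
  obtain ⟨c, hc0, hyc⟩ := hy
  refine ⟨fun a => ⌊c a⌋₊, fun i => ?_⟩
  have hyi : ((y - ∑ a ∈ A, ⌊c a⌋₊ • a) i : ℝ) = ∑ a ∈ A, (c a - ⌊c a⌋₊) * a i := by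
    have := congrFun hyc i
    simp only [emb, Finset.sum_apply, Pi.smul_apply, smul_eq_mul] at this
    simp [this, sub_mul, Finset.sum_apply]
  suffices |((y - ∑ a ∈ A, ⌊c a⌋₊ • a) i : ℝ)| ≤ C by exact_mod_cast this
  rw [hyi]
  calc _ ≤ ∑ a ∈ A, |(a i : ℝ)| := (Finset.abs_sum_le_sum_abs _ _).trans <|
        Finset.sum_le_sum fun a _ => by
          rw [abs_mul]
          exact mul_le_of_le_one_left (abs_nonneg _) (Nat.abs_sub_floor_le (hc0 a))
    _ ≤ C := by exact_mod_cast hA i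

theorem mem_PA_of_sub_nsmul_sum_mem_cone (h0 : 0 ∈ A) (hA : ∀ i, ∑ a ∈ A, |a i| ≤ C)
    {x : Fin d → ℤ} (hx : x ∈ latt d ↑A)
    (hcone : emb d (x - (4 * C + 1) ^ d • ∑ a ∈ A, a) ∈ cone d A) : x ∈ PA d ↑A := by
  set M := (4 * C + 1) ^ d
  obtain ⟨k, hk⟩ := exists_sub_sum_nsmul_abs_le hA hcone
  set δ := x - M • ∑ a ∈ A, a - ∑ a ∈ A, k a • a
  have hgen : ∀ a ∈ A, a ∈ latt d ↑A := fun a ha => AddSubgroup.subset_closure ha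
  have hδ : δ ∈ latt d ↑A :=
    sub_mem (sub_mem hx (nsmul_mem (sum_mem hgen) M))
      (sum_mem fun a ha => nsmul_mem (hgen a ha) _)
  obtain ⟨n, hn⟩ := exists_sum_zsmul_eq_of_mem_latt hδ
  obtain ⟨m, hm, hmn⟩ := exists_sum_zsmul_eq_of_abs_le hA n (hn ▸ hk)
  rw [Fintype.card_fin] at hm
  have hcoeff : ∀ a ∈ A, 0 ≤ (k a + M + m a : ℤ) := fun a ha => by
    have := (abs_le.mp (hm a ha)).1
    push_cast [M] at this ⊢
    omega
  have hx_eq : x = ∑ a ∈ A, (k a + M + m a : ℤ).toNat • a := calc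
    x = ∑ a ∈ A, k a • a + M • ∑ a ∈ A, a + δ := by simp only [δ]; abel
    _ = ∑ a ∈ A, (k a + M + m a : ℤ) • a := by
      rw [← hn, ← hmn, Finset.smul_sum, ← Finset.sum_add_distrib, ← Finset.sum_add_distrib]
      simp [add_smul]
    _ = ∑ a ∈ A, (k a + M + m a : ℤ).toNat • a := Finset.sum_congr rfl fun a ha => by
      rw [← natCast_zsmul, Int.toNat_of_nonneg (hcoeff a ha)]
  rw [hx_eq]
  exact sum_nsmul_mem_PA h0 _

lemma abs_emb_sub_nsmul_sum_sub_emb_le (hA : ∀ i, ∑ a ∈ A, |a i| ≤ C) (M : ℕ)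
    (x : Fin d → ℤ) (j : Fin d) : |emb d (x - M • ∑ a ∈ A, a) j - emb d x j| ≤ M * C := by
  have hσj : |(∑ a ∈ A, a) j| ≤ C := by
    simpa only [Finset.sum_apply] using (Finset.abs_sum_le_sum_abs _ _).trans (hA j)
  have hdiff : emb d (x - M • ∑ a ∈ A, a) j - emb d x j = -((M * (∑ a ∈ A, a) j : ℤ) : ℝ) := by
    simp [emb]
  rw [hdiff, abs_neg, ← Int.cast_abs, abs_mul, Nat.abs_cast]
  exact_mod_cast mul_le_mul_of_nonneg_left hσj (Nat.cast_nonneg M)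

end Cone

section Width

variable {d : ℕ} {A : Finset (Fin d → ℤ)} {a b : Fin d → ℤ}

lemma natAbs_sub_apply_le_width (ha : a ∈ A) (hb : b ∈ A) (i : Fin d) :
    (a i - b i).natAbs ≤ width d A :=
  (Finset.le_sup (f := fun i => ((a, b).1 i - (a, b).2 i).natAbs) (Finset.mem_univ i)).trans
    (Finset.le_sup (f := fun p : (Fin d → ℤ) × (Fin d → ℤ) =>
      Finset.univ.sup fun i => (p.1 i - p.2 i).natAbs) (Finset.mem_product.mpr ⟨ha, hb⟩))

lemma one_le_width (ha : a ∈ A) (hb : b ∈ A) {i : Fin d} (hi : a i ≠ b i) : 1 ≤ width d A :=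
  (Int.natAbs_pos.mpr (sub_ne_zero.mpr hi)).trans_le (natAbs_sub_apply_le_width ha hb i)

lemma sum_abs_apply_le_card_mul_width (h0 : 0 ∈ A) (i : Fin d) :
    ∑ a ∈ A, |a i| ≤ (A.card * width d A : ℕ) := by
  calc ∑ a ∈ A, |a i| ≤ ∑ _a ∈ A, (width d A : ℤ) := Finset.sum_le_sum fun a ha => by
        have h := natAbs_sub_apply_le_width ha h0 i
        rw [Pi.zero_apply, sub_zero] at h
        rw [Int.abs_eq_natAbs]
        exact_mod_cast h
    _ = (A.card * width d A : ℕ) := by simp only [Finset.sum_const, nsmul_eq_mul, Nat.cast_mul]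

end Width

lemma pow_mul_le_of_two_le {d C : ℕ} (hd : 1 ≤ d) (hC : 2 ≤ C) :
    (4 * C + 1) ^ d * C ≤ 4 * d ^ d * C ^ (3 * d) := by
  obtain ⟨e, rfl⟩ := Nat.exists_eq_add_of_le' hd
  have h5 : 5 ^ (e + 1) ≤ 2 * (4 * (e + 1)) ^ (e + 1) := by
    rcases Nat.eq_zero_or_pos e with rfl | he
    · norm_num
    · calc 5 ^ (e + 1) ≤ (4 * (e + 1)) ^ (e + 1) := Nat.pow_le_pow_left (by omega) _
        _ ≤ 2 * (4 * (e + 1)) ^ (e + 1) := Nat.le_mul_of_pos_left _ two_pos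
  have h2 : 2 * 4 ^ e ≤ C ^ (2 * e + 1) := calc
    2 * 4 ^ e = 2 ^ (2 * e + 1) := by rw [pow_succ, pow_mul]; norm_num [mul_comm]
    _ ≤ C ^ (2 * e + 1) := Nat.pow_le_pow_left hC _
  calc (4 * C + 1) ^ (e + 1) * C ≤ (5 * C) ^ (e + 1) * C := by gcongr; omega
    _ = 5 ^ (e + 1) * C ^ (e + 2) := by ring
    _ ≤ 2 * (4 * (e + 1)) ^ (e + 1) * C ^ (e + 2) := by gcongr
    _ = 4 * (e + 1) ^ (e + 1) * (2 * 4 ^ e) * C ^ (e + 2) := by rw [mul_pow]; ring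
    _ ≤ 4 * (e + 1) ^ (e + 1) * C ^ (2 * e + 1) * C ^ (e + 2) := by gcongr
    _ = 4 * (e + 1) ^ (e + 1) * C ^ (3 * (e + 1)) := by ring

theorem interior_points_representable_general (d : ℕ) (A : Finset (Fin d → ℤ))
    (h0 : (0 : Fin d → ℤ) ∈ A) (hl : 2 ≤ A.card)
    (x : Fin d → ℤ)
    (hx2 : x ∈ latt d ↑A)
    (hx3 : ∀ y : Fin d → ℝ,
      (∀ i, |y i - emb d x i| ≤ ((4 * d ^ d * A.card ^ (3 * d) * width d A ^ (3 * d) : ℕ) : ℝ)) →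
      y ∈ Submodule.span ℝ (emb d '' (A : Set (Fin d → ℤ))) → y ∈ cone d A) :
    x ∈ PA d ↑A := by
  obtain ⟨a, ha, b, hb, hab⟩ := Finset.one_lt_card.mp hl
  obtain ⟨i, hi⟩ := Function.ne_iff.mp hab
  set C := A.card * width d A
  have hA : ∀ j, ∑ a ∈ A, |a j| ≤ C := sum_abs_apply_le_card_mul_width h0
  have hK : (4 * C + 1) ^ d * C ≤ 4 * d ^ d * A.card ^ (3 * d) * width d A ^ (3 * d) := by
    rw [mul_assoc _ (A.card ^ _), ← mul_pow]
    exact pow_mul_le_of_two_le i.pos (Nat.mul_le_mul hl (one_le_width ha hb hi))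
  refine mem_PA_of_sub_nsmul_sum_mem_cone h0 hA hx2 (hx3 _ (fun j => ?_) ?_)
  · exact (abs_emb_sub_nsmul_sum_sub_emb_le hA _ x j).trans (by exact_mod_cast hK)
  · exact emb_mem_span_of_mem_latt
      (sub_mem hx2 (nsmul_mem (sum_mem fun a ha => AddSubgroup.subset_closure ha) _))

/-- Interior lattice points of the cone are representable: if the `ℓ^∞`-ball of radius
`K_A = 4 d^d ℓ^{3d} w(A)^{3d}` around `x`, intersected with `span_ℝ(A)`, lies in `C_A`,
then `x ∈ P(A)`. -/
theorem interior_points_representable (d : ℕ) (A : Finset (Fin d → ℤ))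
    (h0 : (0 : Fin d → ℤ) ∈ A) (hl : 2 ≤ A.card)
    (x : Fin d → ℤ)
    (hx1 : emb d x ∈ cone d A) (hx2 : x ∈ latt d ↑A)
    (hx3 : ∀ y : Fin d → ℝ,
      (∀ i, |y i - emb d x i| ≤ ((4 * d ^ d * A.card ^ (3 * d) * width d A ^ (3 * d) : ℕ) : ℝ)) →
      y ∈ Submodule.span ℝ (emb d '' (A : Set (Fin d → ℤ))) → y ∈ cone d A) :
    x ∈ PA d ↑A :=
  interior_points_representable_general d A h0 hl x hx2 hx3
end
end
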